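/- arXiv:1305.3351 — 3 statements merged into one kernel-verified Lean document; each statement's English description precedes it below -/
import Mathlib

section
/- With the recursive definitions p_i − c = (f_i(L_{i−1}) − c)(1 − w_i) and L_i = g_i((p_i − c)/(1 − w_{i+1}) + c) (L_0 = v, w_{n+1} = 0), we have f_i(L_i) > c for all i ∈ {1,...,n}. -/
/-!
Induction on `i`: a positive margin `f_i(L_{i-1}) - c` stays positive after scaling by
`1 - w_i > 0`, and `f_i(L_i) - c = (p_i - c) / (1 - w_{i+1})` is again positive. The margin is
passed from one stage to the next because `f_i < f_{i+1}` pointwise, and it starts from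
`f_1(L_0) = f_1(v) > c`.
-/

theorem lt_div_one_sub_add_of_sub_eq_mul {a p c w w' : ℝ} (ha : c < a) (hw : w < 1)
    (hw' : w' < 1) (hp : p - c = (a - c) * (1 - w)) : c < (p - c) / (1 - w') + c := by
  have hpc : 0 < p - c := hp ▸ mul_pos (sub_pos.mpr ha) (sub_pos.mpr hw)
  linarith [div_pos hpc (sub_pos.mpr hw')]

theorem f_L_gt_c_general (n : ℕ) (c v : ℝ)
    (f g : ℕ → ℝ → ℝ)
    (hinv : ∀ i y, f i (g i y) = y)
    (hford : ∀ i j x, i < j → f i x < f j x)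
    (w : ℕ → ℝ)
    (hw1 : ∀ i ∈ Finset.Icc 1 (n + 1), w i < 1)
    (hfv : ∀ i ∈ Finset.Icc 1 n, f i v > c)
    (p L : ℕ → ℝ) (hL0 : L 0 = v)
    (hp : ∀ i ∈ Finset.Icc 1 n, p i - c = (f i (L (i - 1)) - c) * (1 - w i))
    (hL : ∀ i ∈ Finset.Icc 1 n, L i = g i ((p i - c) / (1 - w (i + 1)) + c)) :
    ∀ i ∈ Finset.Icc 1 n, c < f i (L i) := by
  have step : ∀ i ∈ Finset.Icc 1 n, c < f i (L (i - 1)) → c < f i (L i) := by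
    intro i hi hprev
    obtain ⟨h1, hin⟩ := Finset.mem_Icc.mp hi
    rw [hL i hi, hinv]
    exact lt_div_one_sub_add_of_sub_eq_mul hprev (hw1 i (Finset.mem_Icc.mpr ⟨h1, by omega⟩))
      (hw1 (i + 1) (Finset.mem_Icc.mpr ⟨by omega, by omega⟩)) (hp i hi)
  intro i hi
  obtain ⟨h1, hin⟩ := Finset.mem_Icc.mp hi
  induction i, h1 using Nat.le_induction with
  | base => exact step 1 hi (hL0 ▸ hfv 1 hi)
  | succ k hk ih =>
    have hprev : c < f k (L k) := ih (Finset.mem_Icc.mpr ⟨hk, by omega⟩) (by omega)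
    exact step (k + 1) hi (hprev.trans (hford k (k + 1) _ k.lt_succ_self))

/-- With the recursion `p_i − c = (f_i(L_{i−1}) − c)(1 − w_i)`,
`L_i = g_i((p_i − c)/(1 − w_{i+1}) + c)`, `L_0 = v`, we have `p_i − c > 0`
for every `i ∈ {1,...,n}`. -/
theorem f_L_gt_c (n : ℕ) (hn : 1 ≤ n) (c v : ℝ) (hv : c < v)
    (f g : ℕ → ℝ → ℝ)
    (hfmono : ∀ i, StrictMono (f i)) (hgcont : ∀ i, Continuous (g i))
    (hgmono : ∀ i, StrictMono (g i))
    (hinv : ∀ i y, f i (g i y) = y) (hinv' : ∀ i x, g i (f i x) = x)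
    (hford : ∀ i j x, i < j → f i x < f j x)
    (w : ℕ → ℝ) (hw0 : ∀ i ∈ Finset.Icc 1 (n + 1), 0 ≤ w i)
    (hw1 : ∀ i ∈ Finset.Icc 1 (n + 1), w i < 1)
    (hwdec : ∀ i j, 1 ≤ i → i < j → j ≤ n + 1 → w j < w i)
    (hwn1 : w (n + 1) = 0)
    (hfv : ∀ i ∈ Finset.Icc 1 n, f i v > c)
    (p L : ℕ → ℝ) (hL0 : L 0 = v)
    (hp : ∀ i ∈ Finset.Icc 1 n, p i - c = (f i (L (i - 1)) - c) * (1 - w i))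
    (hL : ∀ i ∈ Finset.Icc 1 n, L i = g i ((p i - c) / (1 - w (i + 1)) + c)) :
    ∀ i ∈ Finset.Icc 1 n, c < f i (L i) :=
  f_L_gt_c_general n c v f g hinv hford w hw1 hfv p L hL0 hp hL
end

section
/- Suppose x is a best response for state j and y > x is a best response for state i with i > j (all relevant prices exceeding c). Then φ_i(x) ≥ u_{i,max} · [(f_j(y) − c)(f_i(x) − c)] / [(f_i(y) − c)(f_j(x) − c)]; combined with assumption (∗) this yields a contradiction, so no such pair exists. Formally: if (f_i(y) − c)(1 − F(y)) = u_i, (f_j(x) − c)(1 − F(x)) = u_j, u_j ≥ (f_j(y) − c)(1 − F(y)), and (f_j(y) − c)/(f_i(y) − c) > (f_j(x) − c)/(f_i(x) − c) with all factors positive, then (f_i(x) − c)(1 − F(x)) > u_i. -/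
/-! Writing `a = f_i(y) − c`, `b = f_j(y) − c`, `p = f_i(x) − c`, `q = f_j(x) − c`,
`s = 1 − F(y)`, `t = 1 − F(x)`, the ratio hypothesis is `q a < b p`, so
`q · (a s) < p · (b s) ≤ p · u_j = q · (p t)`, and dividing by `q > 0` gives `a s < p t`. -/

theorem mul_lt_mul_of_mul_lt_mul_of_mul_le {α : Type*} [CommSemiring α] [LinearOrder α]
    [IsStrictOrderedRing α] {a b p q s t : α} (hq : 0 < q) (hp : 0 ≤ p) (hs : 0 < s)
    (hcross : q * a < b * p) (hle : b * s ≤ q * t) : a * s < p * t := by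
  refine lt_of_mul_lt_mul_left ?_ hq.le
  calc q * (a * s) = q * a * s := (mul_assoc _ _ _).symm
    _ < b * p * s := mul_lt_mul_of_pos_right hcross hs
    _ = p * (b * s) := by ring
    _ ≤ p * (q * t) := mul_le_mul_of_nonneg_left hle hp
    _ = q * (p * t) := mul_left_comm _ _ _

theorem support_order_key_inequality_general (c x y ui uj : ℝ)
    (F fi fj : ℝ → ℝ)
    (hfjx : c < fj x) (hfix : c < fi x) (hfiy : c < fi y)
    (hFy : 0 < 1 - F y)
    (h1 : (fi y - c) * (1 - F y) = ui)
    (h2 : (fj x - c) * (1 - F x) = uj)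
    (h3 : uj ≥ (fj y - c) * (1 - F y))
    (h4 : (fj y - c) / (fi y - c) > (fj x - c) / (fi x - c)) :
    (fi x - c) * (1 - F x) > ui := by
  have hcross : (fj x - c) * (fi y - c) < (fj y - c) * (fi x - c) :=
    (div_lt_div_iff₀ (sub_pos.mpr hfix) (sub_pos.mpr hfiy)).mp h4
  rw [← h1]
  exact mul_lt_mul_of_mul_lt_mul_of_mul_le (sub_pos.mpr hfjx) (sub_pos.mpr hfix).le hFy hcross
    (h2 ▸ h3)

/-- Key inequality for ordering of NE support sets (Theorem 2): if
`(f_i(y) − c)(1 − F(y)) = u_i`, `(f_j(x) − c)(1 − F(x)) = u_j`,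
`u_j ≥ (f_j(y) − c)(1 − F(y))`, and
`(f_j(y) − c)/(f_i(y) − c) > (f_j(x) − c)/(f_i(x) − c)` with all factors
positive, then `(f_i(x) − c)(1 − F(x)) > u_i`. -/
theorem support_order_key_inequality (c x y ui uj : ℝ)
    (F fi fj : ℝ → ℝ)
    (hfjx : c < fj x) (hfjy : c < fj y) (hfix : c < fi x) (hfiy : c < fi y)
    (hFx : 0 < 1 - F x) (hFy : 0 < 1 - F y)
    (hui : 0 < ui) (huj : 0 < uj)
    (h1 : (fi y - c) * (1 - F y) = ui)
    (h2 : (fj x - c) * (1 - F x) = uj)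
    (h3 : uj ≥ (fj y - c) * (1 - F y))
    (h4 : (fj y - c) / (fi y - c) > (fj x - c) / (fi x - c)) :
    (fi x - c) * (1 - F x) > ui :=
  support_order_key_inequality_general c x y ui uj F fi fj hfjx hfix hfiy hFy h1 h2 h3 h4
end

section
/- Suppose the product formula p_k − c = (p_j − c)·Π_{i=j}^{k−1}(f_{i+1}(L_i) − c)/(f_i(L_i) − c) holds for j < k, and assumption (∗) gives (f_i(L_{i−1}) − c)/(f_j(L_{i−1}) − c) < (f_i(L_i) − c)/(f_j(L_i) − c) for j < i (when f_j(L_i) > c and L_i < L_{i−1}). Then p_k − c ≤ (p_j − c)·(f_k(L_{k−1}) − c)/(f_j(L_{k−1}) − c), provided f_j(L_{k−1}) > c. -/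
/-!
Write `g_i = f_i - c`. Each factor of the product is a ratio `g_{i+1}(L_i) / g_i(L_i)`, and
assumption (∗) says that `g_i / g_j` grows when its argument moves from `L_{i-1}` to `L_i`.
Inserting these inequalities between consecutive factors makes the product telescope down to
`g_k(L_{k-1}) / g_j(L_{k-1})`.
-/

open Finset

theorem prod_Ico_div_le_div_of_div_le_div {g : ℕ → ℝ → ℝ} {x : ℕ → ℝ} {j m : ℕ}
    (hjm : j ≤ m) (hg : ∀ y, Monotone (g · y)) (hpos : ∀ i ∈ Icc j m, 0 < g j (x i))
    (hratio : ∀ i ∈ Ico j m,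
      g (i + 1) (x i) / g j (x i) ≤ g (i + 1) (x (i + 1)) / g j (x (i + 1))) :
    ∏ i ∈ Ico j (m + 1), g (i + 1) (x i) / g i (x i) ≤ g (m + 1) (x m) / g j (x m) := by
  induction m, hjm using Nat.le_induction with
  | base => simp
  | succ m hjm ih =>
    have hjm' : j ≤ m + 1 := hjm.trans m.le_succ
    have hgj : 0 < g j (x (m + 1)) := hpos _ (mem_Icc.2 ⟨hjm', le_rfl⟩)
    have hgm : 0 < g (m + 1) (x (m + 1)) := hgj.trans_le (hg _ hjm')
    have hgm' : 0 < g (m + 2) (x (m + 1)) := hgm.trans_le (hg _ (m + 1).le_succ)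
    have hfactor : 0 ≤ g (m + 2) (x (m + 1)) / g (m + 1) (x (m + 1)) := by positivity
    rw [prod_Ico_succ_top (by omega)]
    calc (∏ i ∈ Ico j (m + 1), g (i + 1) (x i) / g i (x i))
            * (g (m + 2) (x (m + 1)) / g (m + 1) (x (m + 1)))
        ≤ g (m + 1) (x m) / g j (x m) * (g (m + 2) (x (m + 1)) / g (m + 1) (x (m + 1))) := by
          gcongr
          exact ih (fun i hi => hpos i (Icc_subset_Icc_right m.le_succ hi))
            (fun i hi => hratio i (Ico_subset_Ico_right m.le_succ hi))
      _ ≤ g (m + 1) (x (m + 1)) / g j (x (m + 1))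
            * (g (m + 2) (x (m + 1)) / g (m + 1) (x (m + 1))) :=
          mul_le_mul_of_nonneg_right (hratio m (mem_Ico.2 ⟨hjm, m.lt_succ_self⟩)) hfactor
      _ = g (m + 2) (x (m + 1)) / g j (x (m + 1)) := by
          field_simp

theorem antitoneOn_Iic_of_lt_sub_one {L : ℕ → ℝ} {n : ℕ}
    (hL : ∀ i ∈ Icc 1 n, L i < L (i - 1)) : AntitoneOn L (Set.Iic n) :=
  antitoneOn_of_succ_le Set.ordConnected_Iic fun a _ _ ha => by
    simpa using (hL (a + 1) (mem_Icc.2 ⟨a.succ_pos, ha⟩)).le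

theorem case_ii_bound_general (n j k : ℕ) (hj1 : 1 ≤ j) (hjk : j < k) (hkn : k ≤ n)
    (c : ℝ) (f : ℕ → ℝ → ℝ) (L p : ℕ → ℝ)
    (hLdec : ∀ i ∈ Finset.Icc 1 n, L i < L (i - 1))
    (hfmono : ∀ i, StrictMono (f i))
    (hford : ∀ a b x, a < b → f a x < f b x)
    (hp : ∀ i ∈ Finset.Icc 1 n, c < p i)
    (hprod : p k - c = (p j - c) *
      ∏ i ∈ Finset.Ico j k, (f (i + 1) (L i) - c) / (f i (L i) - c))
    (hstar : ∀ i, j < i → i ≤ n → c < f j (L i) →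
      (f i (L (i - 1)) - c) / (f j (L (i - 1)) - c)
        < (f i (L i) - c) / (f j (L i) - c))
    (hfjLk1 : c < f j (L (k - 1))) :
    p k - c ≤ (p j - c) * (f k (L (k - 1)) - c) / (f j (L (k - 1)) - c) := by
  obtain ⟨m, rfl⟩ : ∃ m, k = m + 1 := ⟨k - 1, by omega⟩
  rw [Nat.add_sub_cancel] at hfjLk1 ⊢
  have hL := antitoneOn_Iic_of_lt_sub_one hLdec
  have hpos : ∀ i ∈ Icc j m, c < f j (L i) := fun i hi => by
    obtain ⟨-, him⟩ := mem_Icc.1 hi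
    exact hfjLk1.trans_le <| (hfmono j).monotone <|
      hL (Set.mem_Iic.2 (by omega)) (Set.mem_Iic.2 (by omega)) him
  have hratio : ∀ i ∈ Ico j m, (f (i + 1) (L i) - c) / (f j (L i) - c)
      ≤ (f (i + 1) (L (i + 1)) - c) / (f j (L (i + 1)) - c) := fun i hi => by
    obtain ⟨hji, him⟩ := mem_Ico.1 hi
    have := hstar (i + 1) (by omega) (by omega) (hpos (i + 1) (mem_Icc.2 ⟨by omega, him⟩))
    simpa using this.le
  have hg : ∀ y, Monotone fun i => f i y - c := fun y =>
    StrictMono.monotone fun a b h => sub_lt_sub_right (hford a b y h) c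
  have hprod_le := prod_Ico_div_le_div_of_div_le_div (Nat.le_of_lt_succ hjk) hg
    (fun i hi => sub_pos.2 (hpos i hi)) hratio
  have hpj : 0 ≤ p j - c := sub_nonneg.2 (hp j (mem_Icc.2 ⟨hj1, by omega⟩)).le
  rw [hprod, mul_div_assoc]
  exact mul_le_mul_of_nonneg_left hprod_le hpj

/-- Crux of Case ii in the existence proof (Theorem 4): from the product
formula and assumption (∗) one gets
`p_k − c ≤ (p_j − c)·(f_k(L_{k−1}) − c)/(f_j(L_{k−1}) − c)`,
provided `f_j(L_{k−1}) > c`. -/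
theorem case_ii_bound (n j k : ℕ) (hj1 : 1 ≤ j) (hjk : j < k) (hkn : k ≤ n)
    (c : ℝ) (f : ℕ → ℝ → ℝ) (L p : ℕ → ℝ)
    (hLdec : ∀ i ∈ Finset.Icc 1 n, L i < L (i - 1))
    (hfmono : ∀ i, StrictMono (f i))
    (hford : ∀ a b x, a < b → f a x < f b x)
    (hfLi : ∀ i ∈ Finset.Icc 1 n, c < f i (L i))
    (hp : ∀ i ∈ Finset.Icc 1 n, c < p i)
    (hprod : p k - c = (p j - c) *
      ∏ i ∈ Finset.Ico j k, (f (i + 1) (L i) - c) / (f i (L i) - c))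
    (hstar : ∀ i, j < i → i ≤ n → c < f j (L i) →
      (f i (L (i - 1)) - c) / (f j (L (i - 1)) - c)
        < (f i (L i) - c) / (f j (L i) - c))
    (hfjLk1 : c < f j (L (k - 1))) :
    p k - c ≤ (p j - c) * (f k (L (k - 1)) - c) / (f j (L (k - 1)) - c) :=
  case_ii_bound_general n j k hj1 hjk hkn c f L p hLdec hfmono hford hp hprod hstar hfjLk1
end
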